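/- (Per-step energy inequality for the implicit Euler scheme, Theorem 3, classical form.) Let Re, Rm, S > 0 and k > 0. Let uⁿ⁻¹, Bⁿ⁻¹, uⁿ, Bⁿ, Eⁿ, jⁿ, fⁿ : ℝ³ → ℝ³ and pⁿ : ℝ³ → ℝ all be smooth with compact support, and assume pointwise for all x ∈ ℝ³: (uⁿ − uⁿ⁻¹)/k + (uⁿ·∇)uⁿ − (1/Re)Δuⁿ − S (jⁿ × Bⁿ) + ∇pⁿ = fⁿ; jⁿ = Eⁿ + uⁿ × Bⁿ; jⁿ = (1/Rm) curl Bⁿ; (Bⁿ − Bⁿ⁻¹)/k + curl Eⁿ = 0; div uⁿ = 0. Then ∫_{ℝ³} ‖uⁿ‖² dx + (S/Rm) ∫_{ℝ³} ‖Bⁿ‖² dx + (2k/Re) ∫_{ℝ³} ‖∇uⁿ‖² dx + 2kS ∫_{ℝ³} ‖jⁿ‖² dx ≤ ∫_{ℝ³} ‖uⁿ⁻¹‖² dx + (S/Rm) ∫_{ℝ³} ‖Bⁿ⁻¹‖² dx + 2k ∫_{ℝ³} fⁿ · uⁿ dx. -/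

import Mathlib

open MeasureTheory RealInnerProductSpace

noncomputable section

/-- `ℝ³` as Euclidean space. -/
abbrev E3 := EuclideanSpace ℝ (Fin 3)

/-- Partial derivative of `F` at `x` in the `i`-th coordinate direction. -/
def pd (i : Fin 3) (F : E3 → E3) (x : E3) : E3 :=
  fderiv ℝ F x (EuclideanSpace.single i 1)

/-- Divergence of a vector field on `ℝ³`. -/
def div3 (F : E3 → E3) (x : E3) : ℝ := ∑ i, pd i F x i

/-- Curl of a vector field on `ℝ³`. -/
def curl3 (F : E3 → E3) (x : E3) : E3 :=
  (WithLp.equiv 2 (Fin 3 → ℝ)).symm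
    ![pd 1 F x 2 - pd 2 F x 1,
      pd 2 F x 0 - pd 0 F x 2,
      pd 0 F x 1 - pd 1 F x 0]

/-- Cross product on `ℝ³`. -/
def cross3 (u v : E3) : E3 :=
  (WithLp.equiv 2 (Fin 3 → ℝ)).symm
    (crossProduct ((WithLp.equiv 2 (Fin 3 → ℝ)) u) ((WithLp.equiv 2 (Fin 3 → ℝ)) v))

/-- Gradient of a scalar function on `ℝ³` (vector of partial derivatives). -/
def grad3 (p : E3 → ℝ) (x : E3) : E3 :=
  (WithLp.equiv 2 (Fin 3 → ℝ)).symm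
    ![fderiv ℝ p x (EuclideanSpace.single 0 1),
      fderiv ℝ p x (EuclideanSpace.single 1 1),
      fderiv ℝ p x (EuclideanSpace.single 2 1)]

/-- Componentwise Laplacian of a vector field on `ℝ³`. -/
def lap3 (u : E3 → E3) (x : E3) : E3 :=
  ∑ j, fderiv ℝ (fun y => fderiv ℝ u y (EuclideanSpace.single j 1)) x
        (EuclideanSpace.single j 1)

/-- Squared Frobenius norm of the Jacobian of `u` at `x`. -/
def gradNormSq (u : E3 → E3) (x : E3) : ℝ :=
  ∑ i, ∑ j, (fderiv ℝ u x (EuclideanSpace.single j 1) i) ^ 2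

/- ### Auxiliary material -/

open scoped ContDiff

def e3 (i : Fin 3) : E3 := EuclideanSpace.single i 1

lemma one_le_inf : (∞ : WithTop ℕ∞) ≠ 0 := by simp

lemma e3_sum_decomp (v : E3) : ∑ i, v i • e3 i = v := by
  ext j
  fin_cases j <;>
    simp [Fin.sum_univ_three, e3, PiLp.add_apply, PiLp.smul_apply, EuclideanSpace.single_apply]

lemma fderiv_scalar_decomp (g : E3 → ℝ) (x v : E3) :
    fderiv ℝ g x v = ∑ i, v i * fderiv ℝ g x (e3 i) := by
  conv_lhs => rw [← e3_sum_decomp v]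
  rw [map_sum]
  simp [smul_eq_mul]

lemma fderiv_comp_proj {F : E3 → E3} {x : E3} (hF : DifferentiableAt ℝ F x) (i : Fin 3) (v : E3) :
    fderiv ℝ (fun y => F y i) x v = fderiv ℝ F x v i := by
  have h : (fun y => F y i) = (EuclideanSpace.proj (𝕜 := ℝ) i) ∘ F := rfl
  rw [h, fderiv_comp x (ContinuousLinearMap.differentiableAt _) hF]
  rw [ContinuousLinearMap.fderiv]; rfl

lemma comp_smooth {F : E3 → E3} (hF : ContDiff ℝ ∞ F) (i : Fin 3) :
    ContDiff ℝ ∞ (fun y => F y i) := contDiff_euclidean.mp hF i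

lemma comp_supp {F : E3 → E3} (hFs : HasCompactSupport F) (i : Fin 3) :
    HasCompactSupport (fun y => F y i) :=
  hFs.mono fun x hx => fun h0 => hx (show F x i = 0 by rw [h0]; rfl)

lemma integ3 {G : Type*} [Zero G] {f : E3 → ℝ} {g : E3 → G} (hf : Continuous f)
    (hgs : HasCompactSupport g)
    (h : ∀ x, g x = 0 → f x = 0) : Integrable f (volume : Measure E3) :=
  hf.integrable_of_hasCompactSupport (hgs.mono fun x hx hg0 => hx (h x hg0))

lemma fderiv_app_smooth (g : E3 → ℝ) (hg : ContDiff ℝ ∞ g) (v : E3) :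
    ContDiff ℝ ∞ (fun x => fderiv ℝ g x v) :=
  (hg.fderiv_right (m := ∞) (by simp)).clm_apply contDiff_const

lemma fderiv_app_smoothV (u : E3 → E3) (hu : ContDiff ℝ ∞ u) (v : E3) :
    ContDiff ℝ ∞ (fun x => fderiv ℝ u x v) :=
  (hu.fderiv_right (m := ∞) (by simp)).clm_apply contDiff_const

lemma integral_fderiv_zero (g : E3 → ℝ) (hg : ContDiff ℝ ∞ g) (hgs : HasCompactSupport g)
    (v : E3) : ∫ x : E3, fderiv ℝ g x v = 0 := by
  obtain ⟨C, hC⟩ := hg.lipschitzWith_of_hasCompactSupport hgs one_le_inf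
  have h := LipschitzWith.integral_lineDeriv_mul_eq (μ := (volume : Measure E3))
    (LipschitzWith.const (1 : ℝ)) hC hgs (-v)
  have h0 : ∀ (x w : E3), lineDeriv ℝ (fun _ : E3 => (1:ℝ)) x w = 0 := by
    intro x w
    exact (differentiableAt_const (1:ℝ)).lineDeriv_eq_fderiv.trans (by simp)
  simp only [h0, zero_mul, integral_zero, neg_neg, mul_one] at h
  have h1 : ∀ x : E3, lineDeriv ℝ g x v = fderiv ℝ g x v := fun x =>
    (hg.differentiable one_le_inf x).lineDeriv_eq_fderiv
  simp only [h1] at h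
  exact h.symm

lemma integral_fderiv_dot_zero (q : E3 → ℝ) (hq : ContDiff ℝ ∞ q) (w : E3 → E3)
    (hw : ContDiff ℝ ∞ w) (hws : HasCompactSupport w) (hdiv : ∀ x, div3 w x = 0) :
    ∫ x : E3, fderiv ℝ q x (w x) = 0 := by
  have key : ∀ x, fderiv ℝ q x (w x) = ∑ i, fderiv ℝ (fun y => w y i * q y) x (e3 i) := by
    intro x
    have h1 : ∀ i : Fin 3, fderiv ℝ (fun y => w y i * q y) x (e3 i)
        = w x i * fderiv ℝ q x (e3 i) + q x * fderiv ℝ (fun y => w y i) x (e3 i) := by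
      intro i
      rw [fderiv_fun_mul ((comp_smooth hw i).differentiable one_le_inf x)
        (hq.differentiable one_le_inf x)]
      simp [smul_eq_mul]
    simp only [h1]
    rw [Finset.sum_add_distrib, ← Finset.mul_sum]
    have h2 : ∑ i : Fin 3, fderiv ℝ (fun y => w y i) x (e3 i) = div3 w x :=
      Finset.sum_congr rfl fun i _ => fderiv_comp_proj (hw.differentiable one_le_inf x) i _
    rw [h2, hdiv x, mul_zero, add_zero, ← fderiv_scalar_decomp]
  simp only [key]
  rw [integral_finset_sum _ (fun i (_ : i ∈ Finset.univ) =>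
      integ3 (fderiv_app_smooth _ ((comp_smooth hw i).mul hq) _).continuous
        (((comp_supp hws i).mul_right).fderiv (𝕜 := ℝ))
        (fun x (h0 : fderiv ℝ (fun y => w y i * q y) x = 0) => by rw [h0]; rfl))]
  exact Finset.sum_eq_zero fun i _ =>
    integral_fderiv_zero _ ((comp_smooth hw i).mul hq) ((comp_supp hws i).mul_right) _

lemma inner3 (a b : E3) : ⟪a, b⟫ = a 0 * b 0 + a 1 * b 1 + a 2 * b 2 := by
  simp [PiLp.inner_apply, RCLike.inner_apply, Fin.sum_univ_three]
  ring

lemma normsq3 (a : E3) : ‖a‖ ^ 2 = ⟪a, a⟫ := (real_inner_self_eq_norm_sq a).symm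

lemma cross3_apply (u v : E3) (i : Fin 3) :
    cross3 u v i = ![u 1 * v 2 - u 2 * v 1, u 2 * v 0 - u 0 * v 2, u 0 * v 1 - u 1 * v 0] i := by
  simp [cross3, cross_apply]

lemma cross_swap13 (a b c : E3) : ⟪cross3 a b, c⟫ = - ⟪cross3 c b, a⟫ := by
  simp [inner3, cross3_apply, Fin.sum_univ_three]
  ring

lemma grad3_inner (p : E3 → ℝ) (x v : E3) : ⟪grad3 p x, v⟫ = fderiv ℝ p x v := by
  rw [fderiv_scalar_decomp, inner3]
  simp [grad3, e3, Fin.sum_univ_three]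
  ring

lemma inner_sub_self_half (a b : E3) : ⟪a - b, a⟫ = (‖a‖^2 - ‖b‖^2 + ‖a - b‖^2)/2 := by
  have h1 : ‖a - b‖^2 = ‖a‖^2 - 2 * ⟪a, b⟫ + ‖b‖^2 := norm_sub_sq_real a b
  have h2 : ⟪a - b, a⟫ = ⟪a,a⟫ - ⟪b,a⟫ := inner_sub_left a b a
  have h3 : ⟪a,a⟫ = ‖a‖^2 := real_inner_self_eq_norm_sq a
  have h4 : ⟪a,b⟫ = ⟪b,a⟫ := real_inner_comm b a
  linarith

lemma curl3_smooth (F : E3 → E3) (hF : ContDiff ℝ ∞ F) :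
    ContDiff ℝ ∞ (fun x => curl3 F x) := by
  apply contDiff_euclidean.mpr
  intro i
  fin_cases i <;>
  · simp only [curl3, pd, WithLp.equiv_symm_apply, PiLp.toLp_apply, Matrix.cons_val_zero, Matrix.cons_val_one,
      Matrix.head_cons, Matrix.cons_val_two, Matrix.tail_cons]
    exact (comp_smooth (fderiv_app_smoothV F hF _) _).sub (comp_smooth (fderiv_app_smoothV F hF _) _)

lemma cross3_smooth (u v : E3 → E3) (hu : ContDiff ℝ ∞ u) (hv : ContDiff ℝ ∞ v) :
    ContDiff ℝ ∞ (fun x => cross3 (u x) (v x)) := by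
  apply contDiff_euclidean.mpr
  intro i
  have h : ∀ x, cross3 (u x) (v x) i
      = ![u x 1 * v x 2 - u x 2 * v x 1, u x 2 * v x 0 - u x 0 * v x 2,
          u x 0 * v x 1 - u x 1 * v x 0] i := fun x => cross3_apply (u x) (v x) i
  simp only [h]
  fin_cases i <;>
  · simp only [Matrix.cons_val_zero, Matrix.cons_val_one, Matrix.head_cons,
      Matrix.cons_val_two, Matrix.tail_cons]
    exact ((comp_smooth hu _).mul (comp_smooth hv _)).sub ((comp_smooth hu _).mul (comp_smooth hv _))

lemma lap3_smooth (u : E3 → E3) (hu : ContDiff ℝ ∞ u) :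
    ContDiff ℝ ∞ (fun x => lap3 u x) := by
  unfold lap3
  exact ContDiff.sum fun j _ =>
    fderiv_app_smoothV _ (fderiv_app_smoothV u hu _) _

lemma gradNormSq_smooth (u : E3 → E3) (hu : ContDiff ℝ ∞ u) :
    ContDiff ℝ ∞ (fun x => gradNormSq u x) := by
  unfold gradNormSq
  exact ContDiff.sum fun i _ => ContDiff.sum fun j _ =>
    (comp_smooth (fderiv_app_smoothV u hu _) i).pow 2

lemma curl_six (Ef Bf : E3 → E3) (hE : ContDiff ℝ ∞ Ef) (hB : ContDiff ℝ ∞ Bf) (x : E3) :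
    ⟪curl3 Ef x, Bf x⟫ - ⟪Ef x, curl3 Bf x⟫ =
      fderiv ℝ (fun y => Ef y 2 * Bf y 0) x (e3 1) - fderiv ℝ (fun y => Ef y 1 * Bf y 0) x (e3 2)
      + fderiv ℝ (fun y => Ef y 0 * Bf y 1) x (e3 2) - fderiv ℝ (fun y => Ef y 2 * Bf y 1) x (e3 0)
      + fderiv ℝ (fun y => Ef y 1 * Bf y 2) x (e3 0)
      - fderiv ℝ (fun y => Ef y 0 * Bf y 2) x (e3 1) := by
  have hm : ∀ (a b : Fin 3) (v : E3), fderiv ℝ (fun y => Ef y a * Bf y b) x v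
      = fderiv ℝ (fun y => Ef y a) x v * Bf x b + Ef x a * fderiv ℝ (fun y => Bf y b) x v := by
    intro a b v
    rw [fderiv_fun_mul ((comp_smooth hE a).differentiable one_le_inf x)
      ((comp_smooth hB b).differentiable one_le_inf x)]
    simp [smul_eq_mul]
    ring
  simp only [hm, fderiv_comp_proj (hE.differentiable one_le_inf x),
    fderiv_comp_proj (hB.differentiable one_le_inf x)]
  simp only [inner3, curl3, pd, e3, WithLp.equiv_symm_apply, PiLp.toLp_apply, Matrix.cons_val_zero,
    Matrix.cons_val_one, Matrix.head_cons, Matrix.cons_val_two, Matrix.tail_cons]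
  ring

lemma hcs_sub {G : Type*} [NormedAddCommGroup G] {f g : E3 → G} (hf : HasCompactSupport f)
    (hg : HasCompactSupport g) : HasCompactSupport (fun x => f x - g x) := by
  have h := hf.add hg.neg
  rwa [show f + -g = fun x => f x - g x from by funext x; simp [sub_eq_add_neg]] at h

lemma integrable_fderiv_app (g : E3 → ℝ) (hg : ContDiff ℝ ∞ g) (hgs : HasCompactSupport g)
    (v : E3) : Integrable (fun x => fderiv ℝ g x v) (volume : Measure E3) :=
  integ3 (fderiv_app_smooth g hg v).continuous (hgs.fderiv (𝕜 := ℝ))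
    (fun x (h0 : fderiv ℝ g x = 0) => by rw [h0]; rfl)

lemma integral_convect_zero (u : E3 → E3) (hu : ContDiff ℝ ∞ u) (hus : HasCompactSupport u)
    (hdiv : ∀ x, div3 u x = 0) :
    ∫ x : E3, ⟪fderiv ℝ u x (u x), u x⟫ = 0 := by
  have hq : ContDiff ℝ ∞ (fun y => (⟪u y, u y⟫ : ℝ)) := hu.inner ℝ hu
  have hptw : ∀ x, (⟪fderiv ℝ u x (u x), u x⟫ : ℝ)
      = (1/2) * fderiv ℝ (fun y => (⟪u y, u y⟫ : ℝ)) x (u x) := by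
    intro x
    rw [fderiv_inner_apply ℝ (hu.differentiable one_le_inf x) (hu.differentiable one_le_inf x)]
    rw [real_inner_comm (u x) (fderiv ℝ u x (u x))]
    ring
  simp only [hptw]
  rw [integral_const_mul, integral_fderiv_dot_zero _ hq u hu hus hdiv, mul_zero]

lemma integral_lap_aux (u : E3 → E3) (hu : ContDiff ℝ ∞ u) (hus : HasCompactSupport u) :
    ∫ x : E3, (⟪lap3 u x, u x⟫ + gradNormSq u x) = 0 := by
  have hgj : ∀ j : Fin 3, ContDiff ℝ ∞ (fun y => (⟪fderiv ℝ u y (e3 j), u y⟫ : ℝ)) :=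
    fun j => (fderiv_app_smoothV u hu (e3 j)).inner ℝ hu
  have hgjs : ∀ j : Fin 3, HasCompactSupport (fun y => (⟪fderiv ℝ u y (e3 j), u y⟫ : ℝ)) :=
    fun j => hus.mono fun x hx h0 => hx (by simp [h0])
  have hptw : ∀ x, ⟪lap3 u x, u x⟫ + gradNormSq u x
      = ∑ j, fderiv ℝ (fun y => (⟪fderiv ℝ u y (e3 j), u y⟫ : ℝ)) x (e3 j) := by
    intro x
    have h1 : ∀ j : Fin 3, fderiv ℝ (fun y => (⟪fderiv ℝ u y (e3 j), u y⟫ : ℝ)) x (e3 j)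
        = ⟪fderiv ℝ u x (e3 j), fderiv ℝ u x (e3 j)⟫
          + ⟪fderiv ℝ (fun y => fderiv ℝ u y (e3 j)) x (e3 j), u x⟫ := by
      intro j
      rw [fderiv_inner_apply ℝ ((fderiv_app_smoothV u hu _).differentiable one_le_inf x)
        (hu.differentiable one_le_inf x)]
    simp only [h1]
    rw [Finset.sum_add_distrib]
    have hGN : gradNormSq u x = ∑ j : Fin 3, ⟪fderiv ℝ u x (e3 j), fderiv ℝ u x (e3 j)⟫ := by
      unfold gradNormSq
      rw [Finset.sum_comm]
      exact Finset.sum_congr rfl fun j _ => by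
        rw [inner3]; simp [e3, Fin.sum_univ_three, pow_two]
    have hLap : (⟪lap3 u x, u x⟫ : ℝ)
        = ∑ j : Fin 3, ⟪fderiv ℝ (fun y => fderiv ℝ u y (e3 j)) x (e3 j), u x⟫ := by
      unfold lap3
      rw [sum_inner]
      rfl
    rw [hGN, hLap]
    ring
  simp only [hptw]
  rw [integral_finset_sum _ (fun j _ => integrable_fderiv_app _ (hgj j) (hgjs j) _)]
  exact Finset.sum_eq_zero fun j _ => integral_fderiv_zero _ (hgj j) (hgjs j) _

lemma integral_curl_swap (Ef Bf : E3 → E3) (hE : ContDiff ℝ ∞ Ef) (hEs : HasCompactSupport Ef)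
    (hB : ContDiff ℝ ∞ Bf) (hBs : HasCompactSupport Bf) :
    ∫ x : E3, ⟪curl3 Ef x, Bf x⟫ = ∫ x : E3, ⟪Ef x, curl3 Bf x⟫ := by
  have iL : Integrable (fun x => (⟪curl3 Ef x, Bf x⟫ : ℝ)) (volume : Measure E3) :=
    integ3 (((curl3_smooth Ef hE).inner ℝ hB).continuous) hBs (fun x h0 => by simp [h0])
  have iR : Integrable (fun x => (⟪Ef x, curl3 Bf x⟫ : ℝ)) (volume : Measure E3) :=
    integ3 ((hE.inner ℝ (curl3_smooth Bf hB)).continuous) hEs (fun x h0 => by simp [h0])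
  have hsm : ∀ a b : Fin 3, ContDiff ℝ ∞ (fun y => Ef y a * Bf y b) :=
    fun a b => (comp_smooth hE a).mul (comp_smooth hB b)
  have hsp : ∀ a b : Fin 3, HasCompactSupport (fun y => Ef y a * Bf y b) :=
    fun a b => (comp_supp hBs b).mul_left
  have ii : ∀ (a b c : Fin 3), Integrable (fun x => fderiv ℝ (fun y => Ef y a * Bf y b) x (e3 c))
      (volume : Measure E3) := fun a b c => integrable_fderiv_app _ (hsm a b) (hsp a b) _
  have iz : ∀ (a b c : Fin 3), ∫ x : E3, fderiv ℝ (fun y => Ef y a * Bf y b) x (e3 c) = 0 :=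
    fun a b c => integral_fderiv_zero _ (hsm a b) (hsp a b) _
  have hsub : ∫ x : E3, (⟪curl3 Ef x, Bf x⟫ - ⟪Ef x, curl3 Bf x⟫) = 0 := by
    have h6 : ∀ x : E3, (⟪curl3 Ef x, Bf x⟫ - ⟪Ef x, curl3 Bf x⟫ : ℝ) =
        fderiv ℝ (fun y => Ef y 2 * Bf y 0) x (e3 1) - fderiv ℝ (fun y => Ef y 1 * Bf y 0) x (e3 2)
        + fderiv ℝ (fun y => Ef y 0 * Bf y 1) x (e3 2)
        - fderiv ℝ (fun y => Ef y 2 * Bf y 1) x (e3 0)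
        + fderiv ℝ (fun y => Ef y 1 * Bf y 2) x (e3 0)
        - fderiv ℝ (fun y => Ef y 0 * Bf y 2) x (e3 1) := fun x => curl_six Ef Bf hE hB x
    simp only [h6]
    have j1 : Integrable (fun x => fderiv ℝ (fun y => Ef y 2 * Bf y 0) x (e3 1)
        - fderiv ℝ (fun y => Ef y 1 * Bf y 0) x (e3 2)) (volume : Measure E3) :=
      (ii 2 0 1).sub (ii 1 0 2)
    have j2 : Integrable (fun x => fderiv ℝ (fun y => Ef y 2 * Bf y 0) x (e3 1)
        - fderiv ℝ (fun y => Ef y 1 * Bf y 0) x (e3 2)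
        + fderiv ℝ (fun y => Ef y 0 * Bf y 1) x (e3 2)) (volume : Measure E3) :=
      j1.add (ii 0 1 2)
    have j3 : Integrable (fun x => fderiv ℝ (fun y => Ef y 2 * Bf y 0) x (e3 1)
        - fderiv ℝ (fun y => Ef y 1 * Bf y 0) x (e3 2)
        + fderiv ℝ (fun y => Ef y 0 * Bf y 1) x (e3 2)
        - fderiv ℝ (fun y => Ef y 2 * Bf y 1) x (e3 0)) (volume : Measure E3) :=
      j2.sub (ii 2 1 0)
    have j4 : Integrable (fun x => fderiv ℝ (fun y => Ef y 2 * Bf y 0) x (e3 1)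
        - fderiv ℝ (fun y => Ef y 1 * Bf y 0) x (e3 2)
        + fderiv ℝ (fun y => Ef y 0 * Bf y 1) x (e3 2)
        - fderiv ℝ (fun y => Ef y 2 * Bf y 1) x (e3 0)
        + fderiv ℝ (fun y => Ef y 1 * Bf y 2) x (e3 0)) (volume : Measure E3) :=
      j3.add (ii 1 2 0)
    rw [integral_sub j4 (ii 0 2 1), integral_add j3 (ii 1 2 0), integral_sub j2 (ii 2 1 0),
      integral_add j1 (ii 0 1 2), integral_sub (ii 2 0 1) (ii 1 0 2)]
    rw [iz 2 0 1, iz 1 0 2, iz 0 1 2, iz 2 1 0, iz 1 2 0, iz 0 2 1]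
    ring
  rw [integral_sub iL iR] at hsub
  linarith

/-- Theorem 3, classical form: per-step energy inequality for
the implicit Euler scheme. -/
theorem implicit_euler_energy_step
    (Re Rm S k : ℝ) (hRe : 0 < Re) (hRm : 0 < Rm) (hS : 0 < S) (hk : 0 < k)
    (um Bm un Bn En jn fn : E3 → E3) (pn : E3 → ℝ)
    (hum : ContDiff ℝ (⊤ : ℕ∞) um) (hums : HasCompactSupport um)
    (hBm : ContDiff ℝ (⊤ : ℕ∞) Bm) (hBms : HasCompactSupport Bm)
    (hun : ContDiff ℝ (⊤ : ℕ∞) un) (huns : HasCompactSupport un)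
    (hBn : ContDiff ℝ (⊤ : ℕ∞) Bn) (hBns : HasCompactSupport Bn)
    (hEn : ContDiff ℝ (⊤ : ℕ∞) En) (hEns : HasCompactSupport En)
    (hjn : ContDiff ℝ (⊤ : ℕ∞) jn) (hjns : HasCompactSupport jn)
    (hfn : ContDiff ℝ (⊤ : ℕ∞) fn) (hfns : HasCompactSupport fn)
    (hpn : ContDiff ℝ (⊤ : ℕ∞) pn) (hpns : HasCompactSupport pn)
    (momentum : ∀ x : E3,
      k⁻¹ • (un x - um x) + fderiv ℝ un x (un x)
          - (1 / Re) • lap3 un x - S • cross3 (jn x) (Bn x)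
          + grad3 pn x = fn x)
    (ohm : ∀ x : E3, jn x = En x + cross3 (un x) (Bn x))
    (ampere : ∀ x : E3, jn x = (1 / Rm) • curl3 Bn x)
    (faraday : ∀ x : E3, k⁻¹ • (Bn x - Bm x) + curl3 En x = 0)
    (incomp : ∀ x : E3, div3 un x = 0) :
    (∫ x : E3, ‖un x‖ ^ 2) + (S / Rm) * (∫ x : E3, ‖Bn x‖ ^ 2)
        + (2 * k / Re) * (∫ x : E3, gradNormSq un x)
        + 2 * k * S * (∫ x : E3, ‖jn x‖ ^ 2)
      ≤ (∫ x : E3, ‖um x‖ ^ 2) + (S / Rm) * (∫ x : E3, ‖Bm x‖ ^ 2)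
        + 2 * k * ∫ x : E3, ⟪fn x, un x⟫ := by
  -- smoothness downgrades
  have hun' : ContDiff ℝ ∞ un := hun.of_le (by simp)
  have hum' : ContDiff ℝ ∞ um := hum.of_le (by simp)
  have hBn' : ContDiff ℝ ∞ Bn := hBn.of_le (by simp)
  have hBm' : ContDiff ℝ ∞ Bm := hBm.of_le (by simp)
  have hEn' : ContDiff ℝ ∞ En := hEn.of_le (by simp)
  have hjn' : ContDiff ℝ ∞ jn := hjn.of_le (by simp)
  have hfn' : ContDiff ℝ ∞ fn := hfn.of_le (by simp)
  have hpn' : ContDiff ℝ ∞ pn := hpn.of_le (by simp)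
  -- integrabilities
  have if1 : Integrable (fun x => ‖un x‖ ^ 2) (volume : Measure E3) :=
    integ3 (hun'.continuous.norm.pow 2) huns (fun x h0 => by rw [h0]; simp)
  have if2 : Integrable (fun x => ‖um x‖ ^ 2) (volume : Measure E3) :=
    integ3 (hum'.continuous.norm.pow 2) hums (fun x h0 => by rw [h0]; simp)
  have if3 : Integrable (fun x => ‖un x - um x‖ ^ 2) (volume : Measure E3) :=
    integ3 ((hun'.continuous.sub hum'.continuous).norm.pow 2) (hcs_sub huns hums)
      (fun x h0 => by simp only [h0]; simp)
  have ig1 : Integrable (fun x => ‖Bn x‖ ^ 2) (volume : Measure E3) :=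
    integ3 (hBn'.continuous.norm.pow 2) hBns (fun x h0 => by rw [h0]; simp)
  have ig2 : Integrable (fun x => ‖Bm x‖ ^ 2) (volume : Measure E3) :=
    integ3 (hBm'.continuous.norm.pow 2) hBms (fun x h0 => by rw [h0]; simp)
  have ig3 : Integrable (fun x => ‖Bn x - Bm x‖ ^ 2) (volume : Measure E3) :=
    integ3 ((hBn'.continuous.sub hBm'.continuous).norm.pow 2) (hcs_sub hBns hBms)
      (fun x h0 => by simp only [h0]; simp)
  have ifA2 : Integrable (fun x => (⟪fderiv ℝ un x (un x), un x⟫ : ℝ)) (volume : Measure E3) :=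
    integ3 ((((hun'.fderiv_right (m := ∞) (by simp)).clm_apply hun').inner ℝ hun').continuous)
      huns (fun x h0 => by simp [h0])
  have ifA3 : Integrable (fun x => (⟪lap3 un x, un x⟫ : ℝ)) (volume : Measure E3) :=
    integ3 (((lap3_smooth un hun').inner ℝ hun').continuous) huns (fun x h0 => by simp [h0])
  have ifX : Integrable (fun x => (⟪cross3 (un x) (Bn x), jn x⟫ : ℝ)) (volume : Measure E3) :=
    integ3 (((cross3_smooth un Bn hun' hBn').inner ℝ hjn').continuous) hjns
      (fun x h0 => by simp [h0])
  have ifP : Integrable (fun x => fderiv ℝ pn x (un x)) (volume : Measure E3) :=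
    integ3 (((hpn'.fderiv_right (m := ∞) (by simp)).clm_apply hun').continuous) huns
      (fun x h0 => by simp [h0])
  have ifGN : Integrable (fun x => gradNormSq un x) (volume : Measure E3) :=
    integ3 (gradNormSq_smooth un hun').continuous (huns.fderiv (𝕜 := ℝ))
      (fun x (h0 : fderiv ℝ un x = 0) => by unfold gradNormSq; simp [h0])
  have ifJ : Integrable (fun x => ‖jn x‖ ^ 2) (volume : Measure E3) :=
    integ3 (hjn'.continuous.norm.pow 2) hjns (fun x h0 => by rw [h0]; simp)
  have ifCu : Integrable (fun x => (⟪curl3 En x, Bn x⟫ : ℝ)) (volume : Measure E3) :=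
    integ3 (((curl3_smooth En hEn').inner ℝ hBn').continuous) hBns (fun x h0 => by simp [h0])
  -- pointwise momentum scalar identity
  have hM2 : ∀ x : E3, (⟪fn x, un x⟫ : ℝ)
      = k⁻¹ * ((‖un x‖ ^ 2 - ‖um x‖ ^ 2 + ‖un x - um x‖ ^ 2) / 2)
        + ((⟪fderiv ℝ un x (un x), un x⟫ - (1 / Re) * ⟪lap3 un x, un x⟫
          + S * ⟪cross3 (un x) (Bn x), jn x⟫) + fderiv ℝ pn x (un x)) := by
    intro x
    have h := congrArg (fun v : E3 => (⟪v, un x⟫ : ℝ)) (momentum x)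
    simp only [inner_add_left, inner_sub_left, real_inner_smul_left] at h
    have b1 := normsq3 (un x)
    have b2 := normsq3 (um x)
    have b3 : ‖un x - um x‖ ^ 2 = ‖un x‖ ^ 2 - 2 * ⟪un x, um x⟫ + ‖um x‖ ^ 2 :=
      norm_sub_sq_real (un x) (um x)
    have b4 : (⟪un x, um x⟫ : ℝ) = ⟪um x, un x⟫ := real_inner_comm (um x) (un x)
    have b5 : (⟪cross3 (jn x) (Bn x), un x⟫ : ℝ) = - ⟪cross3 (un x) (Bn x), jn x⟫ :=
      cross_swap13 (jn x) (Bn x) (un x)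
    have b6 : (⟪grad3 pn x, un x⟫ : ℝ) = fderiv ℝ pn x (un x) := grad3_inner pn x (un x)
    linear_combination -h - S * b5 + b6 - (k⁻¹ / 2) * b3 - k⁻¹ * b1 + k⁻¹ * b4
  -- pointwise faraday scalar identity
  have hF2 : ∀ x : E3, k⁻¹ * ((‖Bn x‖ ^ 2 - ‖Bm x‖ ^ 2 + ‖Bn x - Bm x‖ ^ 2) / 2)
      + ⟪curl3 En x, Bn x⟫ = 0 := by
    intro x
    have h := congrArg (fun v : E3 => (⟪v, Bn x⟫ : ℝ)) (faraday x)
    simp only [inner_add_left, inner_sub_left, real_inner_smul_left, inner_zero_left] at h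
    have b1 := normsq3 (Bn x)
    have b2 := normsq3 (Bm x)
    have b3 : ‖Bn x - Bm x‖ ^ 2 = ‖Bn x‖ ^ 2 - 2 * ⟪Bn x, Bm x⟫ + ‖Bm x‖ ^ 2 :=
      norm_sub_sq_real (Bn x) (Bm x)
    have b4 : (⟪Bn x, Bm x⟫ : ℝ) = ⟪Bm x, Bn x⟫ := real_inner_comm (Bm x) (Bn x)
    linear_combination h + (k⁻¹ / 2) * b3 + k⁻¹ * b1 - k⁻¹ * b4
  -- pointwise Ohm/Ampere identity
  have hCuB : ∀ x : E3, (⟪En x, curl3 Bn x⟫ : ℝ)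
      = Rm * (‖jn x‖ ^ 2 - ⟪cross3 (un x) (Bn x), jn x⟫) := by
    intro x
    have hcB : curl3 Bn x = Rm • jn x := by
      rw [ampere x, smul_smul, mul_one_div_cancel hRm.ne', one_smul]
    have hEx : En x = jn x - cross3 (un x) (Bn x) := by
      rw [ohm x]; abel
    rw [hcB, real_inner_smul_right, hEx, inner_sub_left, normsq3]
  -- integral identities
  have EA2 : ∫ x : E3, (⟪fderiv ℝ un x (un x), un x⟫ : ℝ) = 0 :=
    integral_convect_zero un hun' huns incomp
  have EA3 : (∫ x : E3, (⟪lap3 un x, un x⟫ : ℝ)) + (∫ x : E3, gradNormSq un x) = 0 := by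
    have h := integral_lap_aux un hun' huns
    rwa [integral_add ifA3 ifGN] at h
  have EP : ∫ x : E3, fderiv ℝ pn x (un x) = 0 :=
    integral_fderiv_dot_zero pn hpn' un hun' huns incomp
  have ECu : (∫ x : E3, (⟪curl3 En x, Bn x⟫ : ℝ))
      = Rm * (∫ x : E3, ‖jn x‖ ^ 2) - Rm * (∫ x : E3, (⟪cross3 (un x) (Bn x), jn x⟫ : ℝ)) := by
    rw [integral_curl_swap En Bn hEn' hEns hBn' hBns]
    simp only [hCuB]
    rw [integral_const_mul, integral_sub ifJ ifX]
    ring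
  have E1 : ∫ x : E3, (⟪fn x, un x⟫ : ℝ)
      = k⁻¹ * (((∫ x : E3, ‖un x‖ ^ 2) - (∫ x : E3, ‖um x‖ ^ 2)
          + (∫ x : E3, ‖un x - um x‖ ^ 2)) / 2)
        + (((∫ x : E3, (⟪fderiv ℝ un x (un x), un x⟫ : ℝ))
            - (1 / Re) * (∫ x : E3, (⟪lap3 un x, un x⟫ : ℝ))
            + S * (∫ x : E3, (⟪cross3 (un x) (Bn x), jn x⟫ : ℝ)))
          + ∫ x : E3, fderiv ℝ pn x (un x)) := by
    simp only [hM2]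
    have ib : Integrable (fun x => k⁻¹ * ((‖un x‖ ^ 2 - ‖um x‖ ^ 2 + ‖un x - um x‖ ^ 2) / 2))
        (volume : Measure E3) := (((if1.sub if2).add if3).div_const 2).const_mul k⁻¹
    have ir1 : Integrable (fun x => (⟪fderiv ℝ un x (un x), un x⟫ : ℝ)
        - (1 / Re) * ⟪lap3 un x, un x⟫) (volume : Measure E3) := ifA2.sub (ifA3.const_mul _)
    have ir2 : Integrable (fun x => (⟪fderiv ℝ un x (un x), un x⟫ : ℝ)
        - (1 / Re) * ⟪lap3 un x, un x⟫ + S * ⟪cross3 (un x) (Bn x), jn x⟫)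
        (volume : Measure E3) := ir1.add (ifX.const_mul _)
    have ir3 : Integrable (fun x => ((⟪fderiv ℝ un x (un x), un x⟫ : ℝ)
        - (1 / Re) * ⟪lap3 un x, un x⟫ + S * ⟪cross3 (un x) (Bn x), jn x⟫)
          + fderiv ℝ pn x (un x)) (volume : Measure E3) := ir2.add ifP
    have is1 : Integrable (fun x => ‖un x‖ ^ 2 - ‖um x‖ ^ 2) (volume : Measure E3) := if1.sub if2
    have is2 : Integrable (fun x => ‖un x‖ ^ 2 - ‖um x‖ ^ 2 + ‖un x - um x‖ ^ 2)
        (volume : Measure E3) := is1.add if3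
    have icm : Integrable (fun x => (1 / Re) * (⟪lap3 un x, un x⟫ : ℝ)) (volume : Measure E3) :=
      ifA3.const_mul _
    have icx : Integrable (fun x => S * (⟪cross3 (un x) (Bn x), jn x⟫ : ℝ))
        (volume : Measure E3) := ifX.const_mul _
    rw [integral_add ib ir3, integral_add ir2 ifP, integral_add ir1 icx,
      integral_sub ifA2 icm, integral_const_mul, integral_const_mul,
      integral_const_mul, integral_div, integral_add is1 if3, integral_sub if1 if2]
  have E2 : k⁻¹ * (((∫ x : E3, ‖Bn x‖ ^ 2) - (∫ x : E3, ‖Bm x‖ ^ 2)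
        + (∫ x : E3, ‖Bn x - Bm x‖ ^ 2)) / 2)
      + (∫ x : E3, (⟪curl3 En x, Bn x⟫ : ℝ)) = 0 := by
    have ibg : Integrable (fun x => k⁻¹ * ((‖Bn x‖ ^ 2 - ‖Bm x‖ ^ 2 + ‖Bn x - Bm x‖ ^ 2) / 2))
        (volume : Measure E3) := (((ig1.sub ig2).add ig3).div_const 2).const_mul k⁻¹
    have h0 : (∫ x : E3, (k⁻¹ * ((‖Bn x‖ ^ 2 - ‖Bm x‖ ^ 2 + ‖Bn x - Bm x‖ ^ 2) / 2)
        + ⟪curl3 En x, Bn x⟫)) = 0 := by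
      simp only [hF2]
      simp
    have it1 : Integrable (fun x => ‖Bn x‖ ^ 2 - ‖Bm x‖ ^ 2) (volume : Measure E3) := ig1.sub ig2
    rwa [integral_add ibg ifCu, integral_const_mul, integral_div,
      integral_add it1 ig3, integral_sub ig1 ig2] at h0
  have hI3 : 0 ≤ ∫ x : E3, ‖un x - um x‖ ^ 2 :=
    integral_nonneg fun x => by positivity
  have hIG3 : 0 ≤ ∫ x : E3, ‖Bn x - Bm x‖ ^ 2 :=
    integral_nonneg fun x => by positivity
  have hkk : k * k⁻¹ = 1 := mul_inv_cancel₀ hk.ne'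
  have hsrm : S / Rm * Rm = S := div_mul_cancel₀ S hRm.ne'
  have key : (∫ x : E3, ‖un x‖ ^ 2) + (S / Rm) * (∫ x : E3, ‖Bn x‖ ^ 2)
        + (2 * k / Re) * (∫ x : E3, gradNormSq un x)
        + 2 * k * S * (∫ x : E3, ‖jn x‖ ^ 2)
      = (∫ x : E3, ‖um x‖ ^ 2) + (S / Rm) * (∫ x : E3, ‖Bm x‖ ^ 2)
        + 2 * k * (∫ x : E3, (⟪fn x, un x⟫ : ℝ))
        - (∫ x : E3, ‖un x - um x‖ ^ 2) - (S / Rm) * (∫ x : E3, ‖Bn x - Bm x‖ ^ 2) := by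
    linear_combination (-2*k) * E1 + (2*k*(S/Rm)) * E2 - (2*k*(S/Rm)) * ECu
      - (2*k) * EA2 + (2*k/Re) * EA3 - (2*k) * EP
      - ((∫ x : E3, ‖un x‖ ^ 2) - (∫ x : E3, ‖um x‖ ^ 2) + (∫ x : E3, ‖un x - um x‖ ^ 2)
          + (S/Rm) * ((∫ x : E3, ‖Bn x‖ ^ 2) - (∫ x : E3, ‖Bm x‖ ^ 2)
            + (∫ x : E3, ‖Bn x - Bm x‖ ^ 2))) * hkk
      - (2*k*((∫ x : E3, ‖jn x‖ ^ 2) - (∫ x : E3, (⟪cross3 (un x) (Bn x), jn x⟫ : ℝ)))) * hsrm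
  rw [key]
  have hσ : 0 ≤ (S / Rm) * (∫ x : E3, ‖Bn x - Bm x‖ ^ 2) :=
    mul_nonneg (div_nonneg hS.le hRm.le) hIG3
  linarith
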